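/- arXiv:1502.08026 — 2 statements merged into one kernel-verified Lean document; each statement's English description precedes it below -/
import Mathlib

section
/- Let K be a differential field of characteristic 0 with field of constants C, and let L be a differential field extension of K with field of constants equal to C. Let C̄ be an algebraic closure of C contained in a differential field extension of L, and let L̄ = L·C̄ denote the compositum. Then the field of constants of L̄ is exactly C̄. -/
/-!
Common setup: differential fields realized as subfields of an ambient field `M`
of characteristic zero equipped with a derivation `D`.
-/

namespace PVGalois

variable {M : Type*} [Field M]

/-- `D` is a derivation on the field `M`. -/
structure IsDerivation (D : M → M) : Prop where
  map_add : ∀ a b : M, D (a + b) = D a + D b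
  leibniz : ∀ a b : M, D (a * b) = a * D b + D a * b

/-- A subfield `F` of `M` is a differential subfield if it is closed under `D`. -/
def DiffClosed (D : M → M) (F : Subfield M) : Prop :=
  ∀ x ∈ F, D x ∈ F

/-- The set of constants of the differential subfield `F`. -/
def constantsOf (D : M → M) (F : Subfield M) : Set M :=
  {x | x ∈ F ∧ D x = 0}

/-- `L` is differentially generated over `K` by the set `S`:
`L` is the smallest differential subfield containing `K` and `S`. -/
def IsDiffGenBy (D : M → M) (K : Subfield M) (S : Set M) (L : Subfield M) : Prop :=
  K ≤ L ∧ S ⊆ (L : Set M) ∧ DiffClosed D L ∧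
    ∀ F : Subfield M, K ≤ F → S ⊆ (F : Set M) → DiffClosed D F → L ≤ F

/-- `y` is a solution of the homogeneous linear differential equation
`Y⁽ⁿ⁾ + a_{n-1} Y⁽ⁿ⁻¹⁾ + ⋯ + a_1 Y' + a_0 Y = 0`. -/
def IsSolution (D : M → M) (n : ℕ) (a : Fin n → M) (y : M) : Prop :=
  D^[n] y + ∑ i : Fin n, a i * D^[(i : ℕ)] y = 0

/-- A family `v` is linearly independent over the set of scalars `A ⊆ M`. -/
def LinIndepOver {ι : Type*} (A : Set M) (v : ι → M) : Prop :=
  ∀ (s : Finset ι) (c : ι → M), (∀ i, c i ∈ A) →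
    ∑ i ∈ s, c i * v i = 0 → ∀ i ∈ s, c i = 0

/-- Every element of `T` is a finite linear combination of the family `v`
with coefficients in `A`. -/
def SpansOver {ι : Type*} (A : Set M) (v : ι → M) (T : Set M) : Prop :=
  ∀ x ∈ T, ∃ (s : Finset ι) (c : ι → M), (∀ i, c i ∈ A) ∧ x = ∑ i ∈ s, c i * v i

/-- `Cb` is an algebraic closure of the set `C` inside `M`:
it contains `C`, is algebraic over `C`, and is algebraically closed. -/
def IsAlgClosureOf (C : Set M) (Cb : Subfield M) : Prop :=
  C ⊆ (Cb : Set M) ∧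
  (∀ x ∈ Cb, ∃ p : Polynomial M, p ≠ 0 ∧ (∀ k, p.coeff k ∈ C) ∧ p.eval x = 0) ∧
  (∀ p : Polynomial M, 0 < p.degree → (∀ k, p.coeff k ∈ Cb) → ∃ x ∈ Cb, p.eval x = 0)

/-- `L|K` is a Picard-Vessiot extension for the equation with coefficients `a`,
with fundamental system of solutions `η`. -/
def IsPicardVessiotWith (D : M → M) (K L : Subfield M) (n : ℕ) (a : Fin n → M)
    (η : Fin n → M) : Prop :=
  (∀ i, a i ∈ K) ∧ (∀ j, IsSolution D n a (η j)) ∧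
  LinIndepOver (constantsOf D L) η ∧
  IsDiffGenBy D K (Set.range η) L ∧
  constantsOf D L = constantsOf D K

/-- `L|K` is a Picard-Vessiot extension for the equation with coefficients `a`. -/
def IsPicardVessiot (D : M → M) (K L : Subfield M) (n : ℕ) (a : Fin n → M) : Prop :=
  ∃ η : Fin n → M, IsPicardVessiotWith D K L n a η

/-- A `K`-differential morphism from `L` into `Lb`: a ring homomorphism defined on `L`
with values in `Lb`, fixing `K` pointwise and commuting with the derivation `D`. -/
def IsDiffHom (D : M → M) (K L Lb : Subfield M) (σ : ↥L →+* M) : Prop :=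
  (∀ x, σ x ∈ Lb) ∧ (∀ x : ↥L, (x : M) ∈ K → σ x = (x : M)) ∧
  ∀ (x : M) (hx : x ∈ L) (hx' : D x ∈ L), σ ⟨D x, hx'⟩ = D (σ ⟨x, hx⟩)

/-- A `Kb`-differential automorphism of `Lb`: a `Kb`-differential morphism of `Lb`
into itself which is onto `Lb`. -/
def IsDiffAut (D : M → M) (Kb Lb : Subfield M) (τ : ↥Lb →+* M) : Prop :=
  IsDiffHom D Kb Lb Lb τ ∧ ∀ y ∈ Lb, ∃ x : ↥Lb, τ x = y

end PVGalois

open PVGalois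

/-!
Every element `c` of `C̄` is a constant: differentiating `p(c) = 0`, for `p ≠ 0` with constant
coefficients, gives `p'(c) c' = 0`, and in characteristic zero `p'` is again such a polynomial,
of lower degree. Since `C̄` is algebraic over `L`, every `x ∈ L·C̄` is an `L`-linear combination
`∑ lᵢ cᵢ` of elements `cᵢ ∈ C̄` that are linearly independent over `L`. If `x' = 0` then
`∑ lᵢ' cᵢ = 0`, so all `lᵢ' = 0`; the `lᵢ` are then constants of `L`, i.e. lie in `C ⊆ C̄`,
and so does `x`.
-/

open Polynomial

namespace PVGalois

variable {M : Type*} [Field M] {D : M → M}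

def IsDerivation.toDerivation (hD : IsDerivation D) : Derivation ℤ M M :=
  Derivation.mk' (AddMonoidHom.mk' D hD.map_add).toIntLinearMap fun a b => by
    simp [hD.leibniz, mul_comm]

@[simp]
lemma IsDerivation.toDerivation_apply (hD : IsDerivation D) (x : M) : hD.toDerivation x = D x :=
  rfl

lemma IsDerivation.apply_eval_of_const_coeff (hD : IsDerivation D) {p : M[X]}
    (hp : ∀ k, D (p.coeff k) = 0) (x : M) :
    D (p.eval x) = (derivative p).eval x * D x := by
  have h0 : hD.toDerivation.mapCoeffs p = 0 := by
    ext k; simp [Derivation.mapCoeffs_apply, hp]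
  simpa [h0] using hD.toDerivation.apply_eval_eq x p

lemma IsDerivation.apply_eq_zero_of_root_of_const_coeff [CharZero M] (hD : IsDerivation D)
    {x : M} :
    ∀ {p : M[X]}, p ≠ 0 → (∀ k, D (p.coeff k) = 0) → p.eval x = 0 → D x = 0 := by
  intro p
  induction h : p.natDegree using Nat.strong_induction_on generalizing p with
  | _ n ih =>
    intro hp hc hx
    have hdeg : p.natDegree ≠ 0 := by
      intro h0
      rw [eq_C_of_natDegree_eq_zero h0, eval_C] at hx
      exact hp (by rw [eq_C_of_natDegree_eq_zero h0, hx, map_zero])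
    have hprod : (derivative p).eval x * D x = 0 := by
      rw [← hD.apply_eval_of_const_coeff hc, hx, ← hD.toDerivation_apply, map_zero]
    refine (mul_eq_zero.1 hprod).elim (fun hx' => ?_) id
    refine ih _ (h ▸ natDegree_derivative_lt hdeg) rfl (mt derivative_eq_zero.1 hdeg) ?_ hx'
    intro k
    have hk : D ((k : M) + 1) = 0 := by simpa using hD.toDerivation.map_natCast (k + 1)
    rw [coeff_derivative, hD.leibniz, hc, hk, mul_zero, zero_mul, add_zero]

lemma isAlgebraic_of_eval_eq_zero {L : Subfield M} {p : M[X]} (hp : p ≠ 0)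
    (hc : ∀ k, p.coeff k ∈ L) {x : M} (hx : p.eval x = 0) : IsAlgebraic L x := by
  obtain ⟨q, rfl⟩ := (mem_lifts p).1 <| (lifts_iff_coeff_lifts (f := algebraMap L M) p).2
    fun k => ⟨(⟨p.coeff k, hc k⟩ : L), rfl⟩
  exact ⟨q, fun h => hp (by simp [h]), by rwa [aeval_def, eval₂_eq_eval_map]⟩

lemma mem_span_of_mem_sup {L A : Subfield M} (hA : ∀ a ∈ A, IsAlgebraic L a) {x : M}
    (hx : x ∈ L ⊔ A) : x ∈ Submodule.span L (A : Set M) := by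
  set F := IntermediateField.adjoin L (A : Set M)
  have hLF : L ≤ F.toSubfield := fun a ha => F.algebraMap_mem ⟨a, ha⟩
  have hAF : A ≤ F.toSubfield := fun a ha => IntermediateField.subset_adjoin _ _ ha
  have hxF : x ∈ F := sup_le hLF hAF hx
  rw [← IntermediateField.mem_toSubalgebra,
    IntermediateField.adjoin_toSubalgebra_of_isAlgebraic hA, ← Subalgebra.mem_toSubmodule,
    Algebra.adjoin_eq_span] at hxF
  exact Submodule.span_mono (Submonoid.closure_le.2 fun a ha => ha) hxF

lemma mem_of_apply_eq_zero_of_mem_span (hD : IsDerivation D) {L A : Subfield M}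
    (hL : DiffClosed D L) (hA : ∀ a ∈ A, D a = 0) (hLA : constantsOf D L ⊆ A) {x : M}
    (hx : x ∈ Submodule.span L (A : Set M)) (hDx : D x = 0) : x ∈ A := by
  obtain ⟨b, hbA, -, hAb, hb⟩ := exists_linearIndepOn_id_extension
    (linearIndepOn_empty L (id : M → M)) (Set.empty_subset (A : Set M))
  obtain ⟨f, t, htb, -, rfl⟩ :=
    Submodule.mem_span_iff_exists_finset_subset.1 (Submodule.span_le.2 hAb hx)
  have hDsum : D (∑ a ∈ t, f a • a) = ∑ a ∈ t, (⟨D (f a), hL _ (f a).2⟩ : L) • a := by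
    rw [← hD.toDerivation_apply, map_sum]
    refine Finset.sum_congr rfl fun a ha => ?_
    simp only [hD.toDerivation_apply, Subfield.smul_def, smul_eq_mul]
    rw [hD.leibniz, hA a (hbA (htb ha)), mul_zero, zero_add]
  have hDf := linearIndepOn_iff'.1 hb t _ htb (hDsum ▸ hDx)
  refine A.sum_mem fun a ha => ?_
  rw [Subfield.smul_def, smul_eq_mul]
  exact A.mul_mem (hLA ⟨(f a).2, congrArg Subtype.val (hDf a ha)⟩) (hbA (htb ha))

end PVGalois

theorem statement_1_general {M : Type*} [Field M] [CharZero M] (D : M → M) (hD : IsDerivation D)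
    (K L : Subfield M) (hLdc : DiffClosed D L)
    (hconst : constantsOf D L = constantsOf D K)
    (Cb : Subfield M) (hCb : IsAlgClosureOf (constantsOf D K) Cb) :
    constantsOf D (L ⊔ Cb) = (Cb : Set M) := by
  obtain ⟨hC_le_Cb, hCb_alg, -⟩ := hCb
  have hCb_const : ∀ c ∈ Cb, D c = 0 := fun c hc =>
    let ⟨_, hp, hp_coeff, hpc⟩ := hCb_alg c hc
    hD.apply_eq_zero_of_root_of_const_coeff hp (fun k => (hp_coeff k).2) hpc
  have hCb_alg_L : ∀ c ∈ Cb, IsAlgebraic L c := fun c hc =>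
    let ⟨_, hp, hp_coeff, hpc⟩ := hCb_alg c hc
    isAlgebraic_of_eval_eq_zero hp (fun k => (hconst ▸ hp_coeff k).1) hpc
  refine Set.Subset.antisymm (fun x ⟨hx, hDx⟩ => ?_) fun c hc =>
    ⟨(le_sup_right : Cb ≤ L ⊔ Cb) hc, hCb_const c hc⟩
  exact mem_of_apply_eq_zero_of_mem_span hD hLdc hCb_const (hconst ▸ hC_le_Cb)
    (mem_span_of_mem_sup hCb_alg_L hx) hDx

/-- If `L|K` is a differential field extension with the same constants
`C` as `K`, and `Cb` is an algebraic closure of `C` inside the ambient differential field,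
then the field of constants of the compositum `L̄ = L ⊔ Cb` is exactly `Cb`. -/
theorem statement_1 {M : Type*} [Field M] [CharZero M] (D : M → M) (hD : IsDerivation D)
    (K L : Subfield M) (hKdc : DiffClosed D K) (hLdc : DiffClosed D L) (hKL : K ≤ L)
    (hconst : constantsOf D L = constantsOf D K)
    (Cb : Subfield M) (hCb : IsAlgClosureOf (constantsOf D K) Cb) :
    constantsOf D (L ⊔ Cb) = (Cb : Set M) :=
  statement_1_general D hD K L hLdc hconst Cb hCb
end

section
/- Let K be a differential field of characteristic 0 with field of constants C, L|K a Picard-Vessiot extension, C̄ an algebraic closure of C, {α_i}_{i∈I} a C-basis of C̄, and L̄ = L·C̄, K̄ = K·C̄. For every K-differential morphism σ : L → L̄, the map σ̂ defined on L̄ by σ̂(Σ λ_i α_i) = Σ σ(λ_i) α_i (for λ_i ∈ L, almost all zero) is a well-defined K̄-differential automorphism of L̄, and the maps σ ↦ σ̂ and τ ↦ τ|_L are mutually inverse bijections between the set DHom_K(L, L̄) of K-differential morphisms L → L̄ and the group DAut_{K̄}(L̄) of K̄-differential automorphisms of L̄. -/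
open PVGalois

/-!
Elements of `Cb` are algebraic over the constants `C`, hence constants themselves (characteristic
zero). A `C`-basis `α` of `Cb` therefore stays independent over `L`, whose constants are `C`, and as
`Cb` is algebraic over `L`, the compositum `L ⊔ Cb` is the `L`-span of `α`. So
`σ̂ (∑ λᵢ αᵢ) = ∑ σ(λᵢ) αᵢ` is well defined; it is multiplicative because `σ` fixes the
`C`-coordinates of the products `αᵢ αⱼ ∈ Cb`, and differential because the `αᵢ` are constants.
It is onto: its image is a differential subfield containing `K ⊔ Cb`, and it contains the
solutions `ηₖ` generating `L`, because any `n + 1` solutions are dependent over the constants `Cb`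
of `L ⊔ Cb`. Finally, a ring homomorphism on `L ⊔ Cb` fixing `Cb` is determined by its
restriction to `L`.
-/

namespace PVGalois

open Finset Polynomial Submodule

variable {M : Type*} [Field M] {D : M → M}

namespace IsDerivation

theorem map_zero (hD : IsDerivation D) : D 0 = 0 := by
  simpa using hD.map_add 0 0

theorem map_one (hD : IsDerivation D) : D 1 = 0 := by
  simpa using hD.leibniz 1 1

theorem map_neg (hD : IsDerivation D) (a : M) : D (-a) = -D a :=
  eq_neg_of_add_eq_zero_left (by rw [← hD.map_add, neg_add_cancel, hD.map_zero])

theorem map_inv_eq_zero (hD : IsDerivation D) {a : M} (ha : D a = 0) : D a⁻¹ = 0 := by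
  rcases eq_or_ne a 0 with rfl | ha₀
  · rwa [inv_zero]
  have h := hD.leibniz a a⁻¹
  rw [mul_inv_cancel₀ ha₀, hD.map_one, ha, zero_mul, add_zero] at h
  exact (mul_eq_zero.mp h.symm).resolve_left ha₀

def constants (hD : IsDerivation D) : Subfield M where
  carrier := {x | D x = 0}
  zero_mem' := hD.map_zero
  one_mem' := hD.map_one
  add_mem' {a b} ha hb := by simp_all [hD.map_add]
  neg_mem' {a} ha := by simp_all [hD.map_neg]
  mul_mem' {a b} ha hb := by simp_all [hD.leibniz]
  inv_mem' a ha := hD.map_inv_eq_zero ha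

def toDerivation_s2 (hD : IsDerivation D) : Derivation hD.constants M M :=
  Derivation.mk'
    { toFun := D
      map_add' := hD.map_add
      map_smul' := fun c x => by
        have hc : D c = 0 := c.2
        simp [Subfield.smul_def, hD.leibniz, hc] }
    fun a b => by simp [hD.leibniz]; ring

@[simp]
theorem toDerivation_apply_s2 (hD : IsDerivation D) (x : M) : hD.toDerivation_s2 x = D x := rfl

theorem map_sum (hD : IsDerivation D) {ι : Type*} (s : Finset ι) (f : ι → M) :
    D (∑ i ∈ s, f i) = ∑ i ∈ s, D (f i) :=
  _root_.map_sum hD.toDerivation_s2 f s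

theorem map_sum_mul_of_const (hD : IsDerivation D) {ι : Type*} (s : Finset ι)
    (c α : ι → M) (hα : ∀ i, D (α i) = 0) :
    D (∑ i ∈ s, c i * α i) = ∑ i ∈ s, D (c i) * α i := by
  simp [hD.map_sum, hD.leibniz, hα]

theorem apply_eq_zero_of_isIntegral [CharZero M] (hD : IsDerivation D) {x : M}
    (hx : IsIntegral hD.constants x) : D x = 0 := by
  have h := congrArg hD.toDerivation_s2 (minpoly.aeval hD.constants x)
  rw [Derivation.map_aeval, hD.toDerivation_s2.map_zero, smul_eq_mul, hD.toDerivation_apply_s2] at h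
  exact (mul_eq_zero.mp h).resolve_left
    ((minpoly.irreducible hx).separable.aeval_derivative_ne_zero (minpoly.aeval _ x))

end IsDerivation

theorem isIntegral_of_eval_eq_zero (F : Subfield M) {p : M[X]} (hp : p ≠ 0)
    (hcoeff : ∀ k, p.coeff k ∈ F) {x : M} (hx : p.eval x = 0) : IsIntegral F x := by
  obtain ⟨q, rfl⟩ : p ∈ lifts (algebraMap F M) :=
    (lifts_iff_coeff_lifts p).mpr fun k => ⟨⟨_, hcoeff k⟩, rfl⟩
  refine IsAlgebraic.isIntegral ⟨q, fun hq => hp (by simp [hq]), ?_⟩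
  rwa [aeval_def, eval₂_eq_eval_map]

theorem IsAlgClosureOf.isIntegral {C : Set M} {Cb F : Subfield M} (hCb : IsAlgClosureOf C Cb)
    (hCF : C ⊆ F) {x : M} (hx : x ∈ Cb) : IsIntegral F x := by
  obtain ⟨p, hp, hcoeff, hpx⟩ := hCb.2.1 x hx
  exact isIntegral_of_eval_eq_zero F hp (fun k => hCF (hcoeff k)) hpx

theorem IsAlgClosureOf.apply_eq_zero [CharZero M] (hD : IsDerivation D) {K Cb : Subfield M}
    (hCb : IsAlgClosureOf (constantsOf D K) Cb) {x : M} (hx : x ∈ Cb) : D x = 0 :=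
  hD.apply_eq_zero_of_isIntegral (hCb.isIntegral (fun _ hy => hy.2) hx)

/-- Normalise one coefficient to `1` and differentiate: this shortens the relation unless all its
coefficients are already constant. -/
theorem exists_constant_relation (hD : IsDerivation D) {F : Subfield M} (hF : DiffClosed D F)
    {ι κ : Type*} (v : ι → κ → M)
    (hstable : ∀ (s : Finset ι) (c : ι → M), (∀ j, c j ∈ F) →
      (∀ k, ∑ j ∈ s, c j * v j k = 0) → ∀ k, ∑ j ∈ s, D (c j) * v j k = 0)
    (s : Finset ι) (c : ι → M) (hc : ∀ j, c j ∈ F) (hrel : ∀ k, ∑ j ∈ s, c j * v j k = 0)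
    (hne : ∃ j ∈ s, c j ≠ 0) :
    ∃ d : ι → M, (∀ j, d j ∈ constantsOf D F) ∧ (∀ k, ∑ j ∈ s, d j * v j k = 0) ∧
      ∃ j ∈ s, d j ≠ 0 := by
  classical
  induction s using Finset.strongInduction generalizing c with
  | H s ih =>
  obtain ⟨j₀, hj₀, hcj₀⟩ := hne
  set μ : ι → M := fun j => c j / c j₀
  have hμF : ∀ j, μ j ∈ F := fun j => div_mem (hc j) (hc j₀)
  have hμrel : ∀ k, ∑ j ∈ s, μ j * v j k = 0 := fun k => by
    simp only [μ, div_mul_eq_mul_div, ← sum_div, hrel k, zero_div]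
  have hμj₀ : μ j₀ = 1 := div_self hcj₀
  by_cases hconst : ∀ j ∈ s, D (μ j) = 0
  · refine ⟨fun j => if j ∈ s then μ j else 0, fun j => ?_, fun k => ?_,
      j₀, hj₀, by simp [hj₀, hμj₀]⟩
    · dsimp only
      split_ifs with hj
      exacts [⟨hμF j, hconst j hj⟩, ⟨zero_mem F, hD.map_zero⟩]
    · rw [← hμrel k]
      exact sum_congr rfl fun j hj => by simp [hj]
  obtain ⟨j₁, hj₁, hDj₁⟩ := not_forall₂.mp hconst
  have hDj₀ : D (μ j₀) = 0 := by rw [hμj₀, hD.map_one]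
  have hrel' : ∀ k, ∑ j ∈ s.erase j₀, D (μ j) * v j k = 0 := fun k => by
    rw [sum_erase _ (by rw [hDj₀, zero_mul])]
    exact hstable s μ hμF hμrel k
  obtain ⟨d, hdC, hdrel, j₂, hj₂, hdj₂⟩ := ih _ (erase_ssubset hj₀) (fun j => D (μ j))
    (fun j => hF _ (hμF j)) hrel'
    ⟨j₁, mem_erase.mpr ⟨fun h => hDj₁ (h ▸ hDj₀), hj₁⟩, hDj₁⟩
  have hj₂₀ : j₂ ≠ j₀ := (mem_erase.mp hj₂).1
  refine ⟨Function.update d j₀ 0, fun j => ?_, fun k => ?_,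
    j₂, mem_of_mem_erase hj₂, by rwa [Function.update_of_ne hj₂₀]⟩
  · rcases eq_or_ne j j₀ with rfl | hj
    · rw [Function.update_self]; exact ⟨zero_mem F, hD.map_zero⟩
    · rw [Function.update_of_ne hj]; exact hdC j
  · rw [← sum_erase _ (by rw [Function.update_self, zero_mul]), ← hdrel k]
    exact sum_congr rfl fun j hj => by rw [Function.update_of_ne (mem_erase.mp hj).1]

theorem LinIndepOver.of_constantsOf (hD : IsDerivation D) {L : Subfield M} (hL : DiffClosed D L)
    {ι : Type*} {α : ι → M} (hα : ∀ i, D (α i) = 0) (h : LinIndepOver (constantsOf D L) α) :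
    LinIndepOver (L : Set M) α := by
  intro s c hc hrel
  by_contra hne
  obtain ⟨d, hdC, hdrel, i, hi, hdi⟩ := exists_constant_relation hD hL (fun i (_ : Unit) => α i)
    (fun s c _ hrel _ => by rw [← hD.map_sum_mul_of_const s c α hα, hrel (), hD.map_zero])
    s c hc (fun _ => hrel) (by simpa using hne)
  exact hdi (h s d hdC (hdrel ()) i hi)

theorem IsSolution.iterate_eq {n : ℕ} {a : Fin n → M} {y : M} (h : IsSolution D n a y) :
    D^[n] y = -∑ i : Fin n, a i * D^[(i : ℕ)] y :=
  eq_neg_of_add_eq_zero_left h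

theorem DiffClosed.iterate_mem {N : Subfield M} (hN : DiffClosed D N) {y : M} (hy : y ∈ N) (m : ℕ) :
    D^[m] y ∈ N := by
  induction m with
  | zero => exact hy
  | succ m ih => rw [Function.iterate_succ_apply']; exact hN _ ih

/-- The Wronskian columns of the solutions are dependent over `N`, and thanks to the equation the
relations among these columns are stable under differentiating the coefficients. -/
theorem exists_constant_relation_of_isSolution (hD : IsDerivation D) {N : Subfield M}
    (hN : DiffClosed D N) {n : ℕ} (a : Fin n → M) (y : Fin (n + 1) → M) (hyN : ∀ j, y j ∈ N)
    (hy : ∀ j, IsSolution D n a (y j)) :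
    ∃ d : Fin (n + 1) → M, (∀ j, d j ∈ constantsOf D N) ∧ ∑ j, d j * y j = 0 ∧ ∃ j, d j ≠ 0 := by
  classical
  rcases n.eq_zero_or_pos with rfl | hn
  · refine ⟨fun _ => 1, fun _ => ⟨one_mem N, hD.map_one⟩, ?_, 0, one_ne_zero⟩
    simpa [IsSolution] using hy
  obtain ⟨c, hc, j₀, hcj₀⟩ : ∃ c : Fin (n + 1) → N,
      ∑ j, c j • (fun i : Fin n => (⟨D^[i] (y j), hN.iterate_mem (hyN j) i⟩ : N)) = 0 ∧
        ∃ j, c j ≠ 0 :=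
    Fintype.not_linearIndependent_iff.mp fun h => by simpa using h.fintype_card_le_finrank
  have hrel : ∀ i : Fin n, ∑ j, (c j : M) * D^[i] (y j) = 0 := fun i => by
    simpa using congrArg (fun w => (w i : M)) hc
  have hstable : ∀ (s : Finset (Fin (n + 1))) (c : Fin (n + 1) → M), (∀ j, c j ∈ N) →
      (∀ i : Fin n, ∑ j ∈ s, c j * D^[i] (y j) = 0) →
      ∀ i : Fin n, ∑ j ∈ s, D (c j) * D^[i] (y j) = 0 := by
    intro s c _ hrel i
    have hnext : ∑ j ∈ s, c j * D^[i + 1] (y j) = 0 := by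
      rcases (Nat.succ_le_of_lt i.2).lt_or_eq with hlt | heq
      · exact hrel ⟨i + 1, hlt⟩
      calc ∑ j ∈ s, c j * D^[i + 1] (y j)
          = -∑ k : Fin n, a k * ∑ j ∈ s, c j * D^[k] (y j) := by
            simp only [Nat.succ_eq_add_one] at heq
            simp only [heq, (hy _).iterate_eq, mul_neg, sum_neg_distrib, mul_sum]
            rw [sum_comm]
            exact congrArg _ (sum_congr rfl fun _ _ => sum_congr rfl fun _ _ => by ring)
        _ = 0 := by simp [hrel]
    have h := congrArg D (hrel i)
    simp only [hD.map_sum, hD.leibniz, sum_add_distrib, hD.map_zero] at h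
    simp only [Function.iterate_succ_apply'] at hnext
    rwa [hnext, zero_add] at h
  obtain ⟨d, hdC, hdrel, j, -, hdj⟩ := exists_constant_relation hD hN
    (fun j (i : Fin n) => D^[i] (y j)) hstable univ (fun j => c j) (fun j => (c j).2) hrel
    ⟨j₀, mem_univ _, by simpa using hcj₀⟩
  exact ⟨d, hdC, by simpa using hdrel ⟨0, hn⟩, j, hdj⟩

theorem LinIndepOver.linearIndependent {F : Subfield M} {ι : Type*} {v : ι → M}
    (h : LinIndepOver (F : Set M) v) : LinearIndependent F v :=
  linearIndependent_iff'.mpr fun s g hg i hi =>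
    Subtype.ext (h s (fun i => g i) (fun i => (g i).2) hg i hi)

/-- Expanding the coefficients in `α` reduces a relation over `B` to relations over `C`. -/
theorem LinIndepOver.of_spansOver {C B : Set M} {L : Subfield M} (hCL : C ⊆ L) (hC₀ : (0 : M) ∈ C)
    {ι κ : Type*} {α : ι → M} {η : κ → M} (hα : LinIndepOver (L : Set M) α)
    (hη : LinIndepOver C η) (hηL : ∀ j, η j ∈ L) (hB : SpansOver C α B) : LinIndepOver B η := by
  classical
  intro s c hcB hrel j hj
  choose t e heC hce using fun j => hB (c j) (hcB j)
  set T := s.biUnion t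
  set E : κ → ι → M := fun j i => if i ∈ t j then e j i else 0
  have hEC : ∀ j i, E j i ∈ C := fun j i => by
    simp only [E]; split_ifs; exacts [heC j i, hC₀]
  have hcT : ∀ j ∈ s, c j = ∑ i ∈ T, E j i * α i := fun j hj => by
    rw [hce j, ← sum_subset (subset_biUnion_of_mem t hj) fun i _ hi => by simp [E, hi]]
    exact sum_congr rfl fun i hi => by simp [E, hi]
  have hrelT : ∑ i ∈ T, (∑ j ∈ s, E j i * η j) * α i = 0 :=
    calc ∑ i ∈ T, (∑ j ∈ s, E j i * η j) * α i = ∑ j ∈ s, (∑ i ∈ T, E j i * α i) * η j := by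
          simp only [sum_mul]
          rw [sum_comm]
          exact sum_congr rfl fun j _ => sum_congr rfl fun i _ => by ring
      _ = ∑ j ∈ s, c j * η j := sum_congr rfl fun j hj => by rw [hcT j hj]
      _ = 0 := hrel
  have hcoeff := hα T _ (fun i => sum_mem fun j _ => mul_mem (hCL (hEC j i)) (hηL j)) hrelT
  rw [hcT j hj]
  exact sum_eq_zero fun i hi => by
    rw [hη s (fun j => E j i) (fun j => hEC j i) (hcoeff i hi) j hj, zero_mul]

theorem exists_sum_eq_of_mem_span {F : Subfield M} {ι : Type*} {v : ι → M} {x : M}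
    (hx : x ∈ span F (Set.range v)) :
    ∃ (s : Finset ι) (c : ι → M), (∀ i, c i ∈ F) ∧ x = ∑ i ∈ s, c i * v i := by
  obtain ⟨c, rfl⟩ := Finsupp.mem_span_range_iff_exists_finsupp.mp hx
  exact ⟨c.support, fun i => c i, fun i => (c i).2, rfl⟩

theorem sum_mul_mem_span {F : Subfield M} {ι : Type*} (v : ι → M) (s : Finset ι) {c : ι → M}
    (hc : ∀ i, c i ∈ F) : ∑ i ∈ s, c i * v i ∈ span F (Set.range v) :=
  sum_mem fun i _ => smul_mem _ (⟨c i, hc i⟩ : F) (subset_span (Set.mem_range_self i))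

theorem sup_subset_span_of_isAlgebraic {L Cb : Subfield M} (h : ∀ x ∈ Cb, IsAlgebraic L x) :
    ((L ⊔ Cb : Subfield M) : Set M) ⊆ span L (Cb : Set M) := by
  have hsup : (IntermediateField.adjoin L (Cb : Set M)).toSubfield = L ⊔ Cb := by
    rw [IntermediateField.adjoin_toSubfield, Subfield.closure_union, Subfield.closure_eq,
      show Set.range (algebraMap L M) = L from Subtype.range_coe, Subfield.closure_eq]
  have hspan := Algebra.adjoin_eq_span L (Cb : Set M)
  rw [show Submonoid.closure (Cb : Set M) = Cb.toSubmonoid from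
    Submonoid.closure_eq Cb.toSubmonoid] at hspan
  intro x hx
  rw [← hsup] at hx
  change x ∈ (IntermediateField.adjoin L (Cb : Set M)).toSubalgebra at hx
  rw [IntermediateField.adjoin_toSubalgebra_of_isAlgebraic h] at hx
  change x ∈ Subalgebra.toSubmodule (Algebra.adjoin L (Cb : Set M)) at hx
  rwa [hspan] at hx

theorem mem_span_iff_mem_sup {C : Set M} {L Cb : Subfield M} (hCL : C ⊆ L)
    (halg : ∀ x ∈ Cb, IsAlgebraic L x) {ι : Type*} {α : ι → M} (hαCb : ∀ i, α i ∈ Cb)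
    (hspan : SpansOver C α Cb) (x : M) : x ∈ span L (Set.range α) ↔ x ∈ L ⊔ Cb := by
  constructor
  · intro hx
    induction hx using Submodule.span_induction with
    | mem x hx => obtain ⟨i, rfl⟩ := hx; exact (le_sup_right : Cb ≤ L ⊔ Cb) (hαCb i)
    | zero => exact zero_mem _
    | add x y _ _ hx hy => exact add_mem hx hy
    | smul c x _ hx => exact mul_mem ((le_sup_left : L ≤ L ⊔ Cb) c.2) hx
  · refine fun hx => span_le.mpr ?_ (sup_subset_span_of_isAlgebraic halg hx)
    intro β hβ
    obtain ⟨s, c, hcC, rfl⟩ := hspan β hβ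
    exact sum_mul_mem_span α s fun i => hCL (hcC i)

theorem deriv_mem_span (hD : IsDerivation D) {L : Subfield M} (hL : DiffClosed D L) {ι : Type*}
    {α : ι → M} (hα₀ : ∀ i, D (α i) = 0) {x : M} (hx : x ∈ span L (Set.range α)) :
    D x ∈ span L (Set.range α) := by
  obtain ⟨s, c, hc, rfl⟩ := exists_sum_eq_of_mem_span hx
  rw [hD.map_sum_mul_of_const s c α hα₀]
  exact sum_mul_mem_span α s fun i => hL _ (hc i)

theorem mem_of_mem_span_of_deriv_eq_zero (hD : IsDerivation D) {L Cb : Subfield M}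
    (hL : DiffClosed D L) (hLCb : constantsOf D L ⊆ Cb) {ι : Type*} {α : ι → M}
    (hα : LinIndepOver (L : Set M) α) (hαCb : ∀ i, α i ∈ Cb) (hα₀ : ∀ i, D (α i) = 0) {x : M}
    (hx : x ∈ span L (Set.range α)) (hDx : D x = 0) : x ∈ Cb := by
  obtain ⟨s, c, hc, rfl⟩ := exists_sum_eq_of_mem_span hx
  rw [hD.map_sum_mul_of_const s c α hα₀] at hDx
  have hDc := hα s _ (fun i => hL _ (hc i)) hDx
  exact sum_mem fun i hi => mul_mem (hLCb ⟨hc i, hDc i hi⟩) (hαCb i)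

end PVGalois

namespace LinearIndependent

open Finset Submodule

variable {M : Type*} [Field M] {L : Subfield M} {ι : Type*} {α : ι → M}
  (hα : LinearIndependent L α) {σ : L →+* M} {x y : M}

variable (σ) in
open Classical in
/-- `∑ λᵢ αᵢ ↦ ∑ σ(λᵢ) αᵢ` on the `L`-span of `α`, and `0` off it. -/
noncomputable def mapCoeffs (x : M) : M :=
  if hx : x ∈ span L (Set.range α) then
    Finsupp.linearCombination M α ((hα.repr ⟨x, hx⟩).mapRange σ (map_zero σ))
  else 0

theorem mapCoeffs_add (hx : x ∈ span L (Set.range α)) (hy : y ∈ span L (Set.range α)) :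
    hα.mapCoeffs σ (x + y) = hα.mapCoeffs σ x + hα.mapCoeffs σ y := by
  have h : (⟨x + y, add_mem hx hy⟩ : span L (Set.range α)) = ⟨x, hx⟩ + ⟨y, hy⟩ := rfl
  simp only [mapCoeffs, dif_pos hx, dif_pos hy, dif_pos (add_mem hx hy), h, map_add,
    Finsupp.mapRange_add (map_add σ)]

theorem mapCoeffs_zero : hα.mapCoeffs σ 0 = 0 := by
  simpa using hα.mapCoeffs_add (σ := σ) (zero_mem _) (zero_mem _)

theorem mapCoeffs_smul (c : L) (hx : x ∈ span L (Set.range α)) :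
    hα.mapCoeffs σ (c * x) = σ c * hα.mapCoeffs σ x := by
  have hcx : (c : M) * x ∈ span L (Set.range α) := smul_mem _ c hx
  have h : (hα.repr ⟨c * x, hcx⟩).mapRange σ (map_zero σ) =
      σ c • (hα.repr ⟨x, hx⟩).mapRange σ (map_zero σ) := by
    rw [show (⟨c * x, hcx⟩ : span L (Set.range α)) = c • ⟨x, hx⟩ from rfl, map_smul]
    ext i; simp
  simp only [mapCoeffs, dif_pos hx, dif_pos hcx, h, map_smul, smul_eq_mul]

theorem mapCoeffs_self (i : ι) : hα.mapCoeffs σ (α i) = α i := by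
  have hi : α i ∈ span L (Set.range α) := subset_span (Set.mem_range_self i)
  simp [mapCoeffs, dif_pos hi, hα.repr_eq_single i ⟨α i, hi⟩ rfl]

theorem mapCoeffs_sum (s : Finset ι) (c : ι → M) (hc : ∀ i, c i ∈ L) :
    hα.mapCoeffs σ (∑ i ∈ s, c i * α i) = ∑ i ∈ s, σ ⟨c i, hc i⟩ * α i := by
  classical
  induction s using Finset.induction with
  | empty => simp [hα.mapCoeffs_zero]
  | insert j s hj ih =>
    have hαj : α j ∈ span L (Set.range α) := subset_span (Set.mem_range_self j)
    have hcαj : c j * α j ∈ span L (Set.range α) := smul_mem _ (⟨c j, hc j⟩ : L) hαj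
    rw [sum_insert hj, sum_insert hj, hα.mapCoeffs_add hcαj (PVGalois.sum_mul_mem_span α s hc),
      ih, hα.mapCoeffs_smul ⟨c j, hc j⟩ hαj, hα.mapCoeffs_self]

theorem mapCoeffs_mul
    (hmul : ∀ x ∈ span L (Set.range α), ∀ y ∈ span L (Set.range α), x * y ∈ span L (Set.range α))
    (hfix : ∀ i j, hα.mapCoeffs σ (α i * α j) = α i * α j)
    (hx : x ∈ span L (Set.range α)) (hy : y ∈ span L (Set.range α)) :
    hα.mapCoeffs σ (x * y) = hα.mapCoeffs σ x * hα.mapCoeffs σ y := by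
  have hleft : ∀ i, hα.mapCoeffs σ (α i * y) = α i * hα.mapCoeffs σ y := by
    intro i
    have hαi : α i ∈ span L (Set.range α) := subset_span (Set.mem_range_self i)
    induction hy using Submodule.span_induction with
    | mem y hy => obtain ⟨j, rfl⟩ := hy; rw [hfix, hα.mapCoeffs_self]
    | zero => simp [hα.mapCoeffs_zero]
    | add y z hy hz ihy ihz =>
      rw [mul_add, hα.mapCoeffs_add (hmul _ hαi _ hy) (hmul _ hαi _ hz), ihy, ihz,
        hα.mapCoeffs_add hy hz, mul_add]
    | smul c y hy ih =>
      rw [Subfield.smul_def, smul_eq_mul, mul_left_comm, hα.mapCoeffs_smul c (hmul _ hαi _ hy),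
        ih, hα.mapCoeffs_smul c hy, mul_left_comm]
  induction hx using Submodule.span_induction with
  | mem x hx => obtain ⟨i, rfl⟩ := hx; rw [hleft, hα.mapCoeffs_self]
  | zero => simp [hα.mapCoeffs_zero]
  | add x z hx hz ihx ihz =>
    rw [add_mul, hα.mapCoeffs_add (hmul _ hx _ hy) (hmul _ hz _ hy), ihx, ihz,
      hα.mapCoeffs_add hx hz, add_mul]
  | smul c x hx ih =>
    rw [Subfield.smul_def, smul_eq_mul, mul_assoc, hα.mapCoeffs_smul c (hmul _ hx _ hy), ih,
      hα.mapCoeffs_smul c hx, mul_assoc]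

variable (σ) in
noncomputable def mapCoeffsRingHom {E : Subfield M} (hE : ∀ x, x ∈ span L (Set.range α) ↔ x ∈ E)
    (hone : hα.mapCoeffs σ 1 = 1) (hfix : ∀ i j, hα.mapCoeffs σ (α i * α j) = α i * α j) :
    E →+* M where
  toFun x := hα.mapCoeffs σ x
  map_one' := hone
  map_mul' x y := hα.mapCoeffs_mul
    (fun x hx y hy => (hE _).2 (mul_mem ((hE x).1 hx) ((hE y).1 hy))) hfix
    ((hE x).2 x.2) ((hE y).2 y.2)
  map_zero' := hα.mapCoeffs_zero
  map_add' x y := hα.mapCoeffs_add ((hE x).2 x.2) ((hE y).2 y.2)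

@[simp]
theorem mapCoeffsRingHom_apply {E : Subfield M} (hE : ∀ x, x ∈ span L (Set.range α) ↔ x ∈ E)
    (hone) (hfix) (x : E) : hα.mapCoeffsRingHom σ hE hone hfix x = hα.mapCoeffs σ x := rfl

theorem mapCoeffs_eq_self {C B : Set M} (hCL : C ⊆ L) (hσC : ∀ x : L, (x : M) ∈ C → σ x = x)
    (hspan : SpansOver C α B) (hx : x ∈ B) : hα.mapCoeffs σ x = x := by
  obtain ⟨s, c, hcC, rfl⟩ := hspan x hx
  rw [hα.mapCoeffs_sum s c fun i => hCL (hcC i)]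
  exact sum_congr rfl fun i _ => by rw [hσC _ (hcC i)]

theorem mapCoeffs_deriv {D : M → M} (hD : IsDerivation D) (hL : DiffClosed D L)
    (hα₀ : ∀ i, D (α i) = 0)
    (hσ : ∀ (x : M) (hx : x ∈ L) (hx' : D x ∈ L), σ ⟨D x, hx'⟩ = D (σ ⟨x, hx⟩))
    (hx : x ∈ span L (Set.range α)) : hα.mapCoeffs σ (D x) = D (hα.mapCoeffs σ x) := by
  obtain ⟨s, c, hc, rfl⟩ := PVGalois.exists_sum_eq_of_mem_span hx
  rw [hD.map_sum_mul_of_const s c α hα₀, hα.mapCoeffs_sum s _ fun i => hL _ (hc i),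
    hα.mapCoeffs_sum s c hc, hD.map_sum_mul_of_const _ _ α hα₀]
  exact sum_congr rfl fun i _ => by rw [hσ]

end LinearIndependent

namespace PVGalois

open Finset Submodule

variable {M : Type*} [Field M] {D : M → M}

theorem apply_eq_apply_of_mem_sup {E A B : Subfield M} (hAE : A ≤ E) (hBE : B ≤ E)
    (f g : E →+* M) (hA : ∀ x : E, (x : M) ∈ A → f x = g x)
    (hB : ∀ x : E, (x : M) ∈ B → f x = g x) {x : E} (hx : (x : M) ∈ A ⊔ B) : f x = g x := by
  have hle : A ⊔ B ≤ (f.eqLocusField g).map E.subtype :=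
    sup_le (fun a ha => ⟨⟨a, hAE ha⟩, hA _ ha, rfl⟩) fun b hb => ⟨⟨b, hBE hb⟩, hB _ hb, rfl⟩
  obtain ⟨y, hy, hyx⟩ := hle hx
  rw [← show y = x from Subtype.ext hyx]
  exact hy

theorem IsDiffHom.ext {K L Cb N : Subfield M} {τ τ' : ↥(L ⊔ Cb) →+* M}
    (hτ : IsDiffHom D (K ⊔ Cb) (L ⊔ Cb) N τ) (hτ' : IsDiffHom D (K ⊔ Cb) (L ⊔ Cb) N τ')
    (h : ∀ x : L, τ (Subfield.inclusion le_sup_left x) = τ' (Subfield.inclusion le_sup_left x)) :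
    τ = τ' := by
  have hCb : Cb ≤ K ⊔ Cb := le_sup_right
  exact RingHom.ext fun x => apply_eq_apply_of_mem_sup le_sup_left le_sup_right τ τ'
    (fun y hy => h ⟨y, hy⟩) (fun y hy => (hτ.2.1 y (hCb hy)).trans (hτ'.2.1 y (hCb hy)).symm) x.2

theorem IsDiffHom.restrict {K K' L L' N : Subfield M} (hKK' : K ≤ K') (hLL' : L ≤ L')
    {τ : L' →+* M} (hτ : IsDiffHom D K' L' N τ) :
    IsDiffHom D K L N (τ.comp (Subfield.inclusion hLL')) :=
  ⟨fun _ => hτ.1 _, fun _ hx => hτ.2.1 _ (hKK' hx),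
    fun x hx hx' => hτ.2.2 x (hLL' hx) (hLL' hx')⟩

theorem IsDiffHom.isSolution {K E : Subfield M} (hE : DiffClosed D E) (hKE : K ≤ E)
    {τ : E →+* M} (hτ : IsDiffHom D K E E τ) {n : ℕ} {a : Fin n → M} (ha : ∀ i, a i ∈ K)
    {y : M} (hy : y ∈ E) (hsol : IsSolution D n a y) : IsSolution D n a (τ ⟨y, hy⟩) := by
  have hcomm : ∀ m : ℕ, τ ⟨D^[m] y, hE.iterate_mem hy m⟩ = D^[m] (τ ⟨y, hy⟩) := fun m => by
    induction m with
    | zero => rfl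
    | succ m ih =>
      simp only [Function.iterate_succ_apply']
      rw [hτ.2.2 _ (hE.iterate_mem hy m), ih]
  have h0 : (⟨D^[n] y, hE.iterate_mem hy n⟩ +
      ∑ i, ⟨a i, hKE (ha i)⟩ * ⟨D^[(i : ℕ)] y, hE.iterate_mem hy i⟩ : E) = 0 :=
    Subtype.ext (by simpa [IsSolution] using hsol)
  have hτa : ∀ i, τ ⟨a i, hKE (ha i)⟩ = a i := fun i => hτ.2.1 _ (ha i)
  have h := congrArg τ h0
  simp only [map_add, map_sum, map_mul, map_zero, hcomm, hτa] at h
  exact h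

/-- `τ η₁, …, τ ηₙ, y` are `n + 1` solutions, hence dependent over the constants `Cb` of `N`,
while `τ η₁, …, τ ηₙ` are independent; so `y` is a `Cb`-combination of them. -/
theorem mem_fieldRange_of_isSolution (hD : IsDerivation D) {N Cb : Subfield M}
    (hN : DiffClosed D N) (hCbN : Cb ≤ N) (hconst : constantsOf D N ⊆ Cb) {τ : N →+* M}
    (hτN : ∀ x, τ x ∈ N) (hτCb : ∀ x : N, (x : M) ∈ Cb → τ x = x) {n : ℕ} {a η : Fin n → M}
    (hηN : ∀ j, η j ∈ N) (hη : LinIndepOver (Cb : Set M) η)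
    (hτη : ∀ j, IsSolution D n a (τ ⟨η j, hηN j⟩)) {y : M} (hyN : y ∈ N)
    (hy : IsSolution D n a y) : y ∈ τ.fieldRange := by
  obtain ⟨d, hdC, hdrel, j₀, hdj₀⟩ := exists_constant_relation_of_isSolution hD hN a
    (Fin.snoc (fun j => τ ⟨η j, hηN j⟩) y)
    (Fin.lastCases (by simpa using hyN) fun j => by simpa using hτN ⟨η j, hηN j⟩)
    (Fin.lastCases (by simpa using hy) fun j => by simpa using hτη j)
  have hdCb : ∀ j, d j ∈ Cb := fun j => hconst (hdC j)
  simp only [Fin.sum_univ_castSucc, Fin.snoc_castSucc, Fin.snoc_last] at hdrel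
  have hmem : ∑ j : Fin n, d j.castSucc * η j ∈ N :=
    sum_mem fun j _ => mul_mem (hCbN (hdCb _)) (hηN j)
  have hsum : ∑ j : Fin n, d j.castSucc * τ ⟨η j, hηN j⟩ = τ ⟨_, hmem⟩ := by
    have h : (⟨_, hmem⟩ : N) = ∑ j : Fin n, ⟨d j.castSucc, hCbN (hdCb _)⟩ * ⟨η j, hηN j⟩ :=
      Subtype.ext (by simp)
    rw [h, map_sum]
    exact sum_congr rfl fun j _ => by rw [map_mul, hτCb ⟨_, hCbN (hdCb _)⟩ (hdCb _)]
  have hlast : d (Fin.last n) ≠ 0 := by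
    intro h0
    rw [h0, zero_mul, add_zero, hsum, map_eq_zero_iff _ τ.injective] at hdrel
    have hd := hη univ _ (fun j => hdCb j.castSucc) (congrArg Subtype.val hdrel)
    induction j₀ using Fin.lastCases with
    | last => exact hdj₀ h0
    | cast j => exact hdj₀ (hd j (mem_univ j))
  have hCbT : Cb ≤ τ.fieldRange := fun x hx => ⟨⟨x, hCbN hx⟩, hτCb _ hx⟩
  have hy : y = -(d (Fin.last n))⁻¹ * ∑ j : Fin n, d j.castSucc * τ ⟨η j, hηN j⟩ := by
    field_simp
    linear_combination hdrel
  rw [hy]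
  exact mul_mem (neg_mem (inv_mem (hCbT (hdCb _))))
    (sum_mem fun j _ => mul_mem (hCbT (hdCb _)) ⟨_, rfl⟩)

theorem IsPicardVessiotWith.surjective (hD : IsDerivation D) {K L Cb : Subfield M} {n : ℕ}
    {a η : Fin n → M} (hPV : IsPicardVessiotWith D K L n a η) (hN : DiffClosed D (L ⊔ Cb))
    (hconst : constantsOf D (L ⊔ Cb) ⊆ Cb) (hη : LinIndepOver (Cb : Set M) η)
    {τ : ↥(L ⊔ Cb) →+* M} (hτ : IsDiffHom D (K ⊔ Cb) (L ⊔ Cb) (L ⊔ Cb) τ) :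
    ∀ y ∈ L ⊔ Cb, ∃ x, τ x = y := by
  obtain ⟨haK, hsol, -, hgen, -⟩ := hPV
  have hKL : K ≤ L := hgen.1
  have hLN : L ≤ L ⊔ Cb := le_sup_left
  have hηN : ∀ j, η j ∈ L ⊔ Cb := fun j => hLN (hgen.2.1 ⟨j, rfl⟩)
  have hτCb : ∀ x : ↥(L ⊔ Cb), (x : M) ∈ Cb → τ x = x := fun x hx =>
    hτ.2.1 x ((le_sup_right : Cb ≤ K ⊔ Cb) hx)
  have hCbT : Cb ≤ τ.fieldRange := fun x hx => ⟨⟨x, le_sup_right (a := L) hx⟩, hτCb _ hx⟩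
  have hKT : K ≤ τ.fieldRange := fun x hx =>
    ⟨⟨x, hLN (hKL hx)⟩, hτ.2.1 _ ((le_sup_left : K ≤ K ⊔ Cb) hx)⟩
  have hTD : DiffClosed D τ.fieldRange := by
    rintro _ ⟨x, rfl⟩
    exact ⟨⟨D x, hN _ x.2⟩, hτ.2.2 x x.2 _⟩
  have hτη : ∀ j, IsSolution D n a (τ ⟨η j, hηN j⟩) := fun j =>
    hτ.isSolution hN (sup_le_sup_right hKL Cb) (fun i => (le_sup_left : K ≤ K ⊔ Cb) (haK i)) _
      (hsol j)
  have hLT : L ≤ τ.fieldRange := hgen.2.2.2 _ hKT (by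
    rintro _ ⟨k, rfl⟩
    exact mem_fieldRange_of_isSolution hD hN le_sup_right hconst hτ.1 hτCb hηN hη hτη (hηN k)
      (hsol k)) hTD
  exact fun y hy => sup_le hLT hCbT hy

theorem exists_isDiffHom_extension (hD : IsDerivation D) {K L Cb : Subfield M}
    (hL : DiffClosed D L) (hKL : K ≤ L) {ι : Type*} {α : ι → M}
    (hα : LinearIndependent L α) (hαCb : ∀ i, α i ∈ Cb) (hα₀ : ∀ i, D (α i) = 0)
    (hαspan : SpansOver (constantsOf D K) α Cb)
    (hspan : ∀ x, x ∈ span L (Set.range α) ↔ x ∈ L ⊔ Cb)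
    {σ : L →+* M} (hσ : IsDiffHom D K L (L ⊔ Cb) σ) :
    ∃ τ : ↥(L ⊔ Cb) →+* M, IsDiffHom D (K ⊔ Cb) (L ⊔ Cb) (L ⊔ Cb) τ ∧
      (∀ x : L, τ (Subfield.inclusion le_sup_left x) = σ x) ∧
      ∀ x : ↥(L ⊔ Cb), τ x = hα.mapCoeffs σ x := by
  have hfix : ∀ x ∈ Cb, hα.mapCoeffs σ x = x := fun x hx =>
    hα.mapCoeffs_eq_self (fun y hy => hKL hy.1) (fun y hy => hσ.2.1 y hy.1) hαspan hx
  have hext : ∀ x : L, hα.mapCoeffs σ x = σ x := fun x => by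
    simpa [hfix 1 (one_mem Cb)] using hα.mapCoeffs_smul (σ := σ) x ((hspan 1).2 (one_mem _))
  refine ⟨hα.mapCoeffsRingHom σ hspan (hfix 1 (one_mem Cb))
    (fun i j => hfix _ (mul_mem (hαCb i) (hαCb j))), ⟨fun x => ?_, fun x hx => ?_,
    fun x hx _ => hα.mapCoeffs_deriv hD hL hα₀ hσ.2.2 ((hspan x).2 hx)⟩, hext, fun _ => rfl⟩
  · obtain ⟨s, c, hc, hx⟩ := exists_sum_eq_of_mem_span ((hspan x).2 x.2)
    rw [LinearIndependent.mapCoeffsRingHom_apply, hx, hα.mapCoeffs_sum s c hc]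
    exact sum_mem fun i _ => mul_mem (hσ.1 _) ((le_sup_right : Cb ≤ L ⊔ Cb) (hαCb i))
  · refine apply_eq_apply_of_mem_sup (hKL.trans le_sup_left) le_sup_right _ (L ⊔ Cb).subtype
      (fun y hy => ?_) (fun y hy => hfix _ hy) hx
    exact (hext ⟨y, hKL hy⟩).trans (hσ.2.1 _ hy)

end PVGalois

theorem statement_2_general {M : Type*} [Field M] [CharZero M] (D : M → M) (hD : IsDerivation D)
    (K L : Subfield M) (hLdc : DiffClosed D L) (hKL : K ≤ L)
    (n : ℕ) (a : Fin n → M) (hPV : IsPicardVessiot D K L n a)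
    (Cb : Subfield M) (hCb : IsAlgClosureOf (constantsOf D K) Cb)
    {ι : Type*} (α : ι → M) (hαmem : ∀ i, α i ∈ Cb)
    (hαind : LinIndepOver (constantsOf D K) α)
    (hαspan : SpansOver (constantsOf D K) α (Cb : Set M)) :
    (∀ τ : ↥(L ⊔ Cb) →+* M, IsDiffAut D (K ⊔ Cb) (L ⊔ Cb) τ →
        IsDiffHom D K L (L ⊔ Cb) (τ.comp (Subfield.inclusion le_sup_left))) ∧
    (∀ σ : ↥L →+* M, IsDiffHom D K L (L ⊔ Cb) σ →
        ∃ τ : ↥(L ⊔ Cb) →+* M, IsDiffAut D (K ⊔ Cb) (L ⊔ Cb) τ ∧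
          (∀ x : ↥L, τ (Subfield.inclusion le_sup_left x) = σ x) ∧
          (∀ (s : Finset ι) (lam : ι → M) (hlam : ∀ i, lam i ∈ L),
            τ ⟨∑ i ∈ s, lam i * α i,
                Subfield.sum_mem _ fun i _ => mul_mem
                  (SetLike.le_def.mp le_sup_left (hlam i))
                  (SetLike.le_def.mp le_sup_right (hαmem i))⟩
              = ∑ i ∈ s, σ ⟨lam i, hlam i⟩ * α i)) ∧
    (∀ τ τ' : ↥(L ⊔ Cb) →+* M, IsDiffAut D (K ⊔ Cb) (L ⊔ Cb) τ →
        IsDiffAut D (K ⊔ Cb) (L ⊔ Cb) τ' →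
        (∀ x : ↥L, τ (Subfield.inclusion le_sup_left x)
            = τ' (Subfield.inclusion le_sup_left x)) → τ = τ') := by
  obtain ⟨η, hPV⟩ := hPV
  have ⟨_, _, hηind, hgen, hconstL⟩ := hPV
  have hCL : constantsOf D K ⊆ L := fun x hx => hKL hx.1
  have hα₀ : ∀ i, D (α i) = 0 := fun i => hCb.apply_eq_zero hD (hαmem i)
  have hαL : LinIndepOver (L : Set M) α := .of_constantsOf hD hLdc hα₀ (hconstL ▸ hαind)
  have hspan := mem_span_iff_mem_sup hCL (fun x hx => (hCb.isIntegral hCL hx).isAlgebraic)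
    hαmem hαspan
  have hN : DiffClosed D (L ⊔ Cb) := fun x hx =>
    (hspan _).1 (deriv_mem_span hD hLdc hα₀ ((hspan x).2 hx))
  have hconst : constantsOf D (L ⊔ Cb) ⊆ Cb := fun x hx =>
    mem_of_mem_span_of_deriv_eq_zero hD hLdc (hconstL ▸ hCb.1) hαL hαmem hα₀
      ((hspan x).2 hx.1) hx.2
  have hηCb : LinIndepOver (Cb : Set M) η := .of_spansOver hCL ⟨zero_mem K, hD.map_zero⟩ hαL
    (hconstL ▸ hηind) (fun j => hgen.2.1 ⟨j, rfl⟩) hαspan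
  refine ⟨fun τ hτ => hτ.1.restrict le_sup_left le_sup_left, fun σ hσ => ?_,
    fun τ τ' hτ hτ' h => hτ.1.ext hτ'.1 h⟩
  obtain ⟨τ, hτ, hext, hτσ⟩ := exists_isDiffHom_extension hD hLdc hKL hαL.linearIndependent
    hαmem hα₀ hαspan hspan hσ
  exact ⟨τ, ⟨hτ, hPV.surjective hD hN hconst hηCb hτ⟩, hext,
    fun s lam hlam => (hτσ _).trans (hαL.linearIndependent.mapCoeffs_sum s lam hlam)⟩

/-- Let `L|K` be a Picard-Vessiot extension, `Cb` an algebraic closure of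
the constants `C` of `K` with `C`-basis `α`, and `L̄ = L ⊔ Cb`, `K̄ = K ⊔ Cb`.  Then:
(a) the restriction to `L` of any `K̄`-differential automorphism of `L̄` is a
`K`-differential morphism `L → L̄`;
(b) every `K`-differential morphism `σ : L → L̄` extends to a `K̄`-differential
automorphism `σ̂` of `L̄` given by the formula `σ̂ (∑ λᵢ αᵢ) = ∑ σ(λᵢ) αᵢ`;
(c) such an extension is unique.
Hence `σ ↦ σ̂` and `τ ↦ τ|_L` are mutually inverse bijections between
`DHom_K(L, L̄)` and `DAut_{K̄}(L̄)`. -/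
theorem statement_2 {M : Type*} [Field M] [CharZero M] (D : M → M) (hD : IsDerivation D)
    (K L : Subfield M) (hKdc : DiffClosed D K) (hLdc : DiffClosed D L) (hKL : K ≤ L)
    (n : ℕ) (a : Fin n → M) (hPV : IsPicardVessiot D K L n a)
    (Cb : Subfield M) (hCb : IsAlgClosureOf (constantsOf D K) Cb)
    {ι : Type*} (α : ι → M) (hαmem : ∀ i, α i ∈ Cb)
    (hαind : LinIndepOver (constantsOf D K) α)
    (hαspan : SpansOver (constantsOf D K) α (Cb : Set M)) :
    (∀ τ : ↥(L ⊔ Cb) →+* M, IsDiffAut D (K ⊔ Cb) (L ⊔ Cb) τ →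
        IsDiffHom D K L (L ⊔ Cb) (τ.comp (Subfield.inclusion le_sup_left))) ∧
    (∀ σ : ↥L →+* M, IsDiffHom D K L (L ⊔ Cb) σ →
        ∃ τ : ↥(L ⊔ Cb) →+* M, IsDiffAut D (K ⊔ Cb) (L ⊔ Cb) τ ∧
          (∀ x : ↥L, τ (Subfield.inclusion le_sup_left x) = σ x) ∧
          (∀ (s : Finset ι) (lam : ι → M) (hlam : ∀ i, lam i ∈ L),
            τ ⟨∑ i ∈ s, lam i * α i,
                Subfield.sum_mem _ fun i _ => mul_mem
                  (SetLike.le_def.mp le_sup_left (hlam i))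
                  (SetLike.le_def.mp le_sup_right (hαmem i))⟩
              = ∑ i ∈ s, σ ⟨lam i, hlam i⟩ * α i)) ∧
    (∀ τ τ' : ↥(L ⊔ Cb) →+* M, IsDiffAut D (K ⊔ Cb) (L ⊔ Cb) τ →
        IsDiffAut D (K ⊔ Cb) (L ⊔ Cb) τ' →
        (∀ x : ↥L, τ (Subfield.inclusion le_sup_left x)
            = τ' (Subfield.inclusion le_sup_left x)) → τ = τ') :=
  statement_2_general D hD K L hLdc hKL n a hPV Cb hCb α hαmem hαind hαspan
end
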